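/- For relation triples A and B, the norm of the sequential composition equals the product of the norms: ‖A;B‖ = ‖A‖ · ‖B‖. In particular, ‖A;B‖ ≥ ‖A‖ · ‖B‖: if S ⊆ A₊ × B₊ has the property that for every x ∈ A₋ and every ρ : A₊ → B₋ there is (a,b) ∈ S with A(x,a) and B(ρ(a),b), then |S| ≥ ‖A‖ · ‖B‖. -/

import Mathlib

/-!
For the upper bound, the product of a minimal cover of `A` and a minimal cover of `B` covers
`A;B`. For the lower bound, let `S` cover `A;B` and call `u ∈ A₊` *full* if the fibre
`{w | (u, w) ∈ S}` covers `B`. The full points cover `A`: if some `x` were related to no full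
point, choosing for every `u` with `A x u` an element `ρ u` of `B₋` that the fibre over `u`
misses would give a pair `(x, ρ)` that `S` does not cover. Hence `S` contains at least `‖A‖`
fibres, each of size at least `‖B‖`.
-/

open Cardinal

universe u

/-- The norm of a relation triple `(α, β, A)`: the least cardinality of a set
`Z ⊆ β` such that every `x : α` is `A`-related to some member of `Z`. -/
noncomputable def rnorm {α β : Type u} (A : α → β → Prop) : Cardinal.{u} :=
  sInf { c | ∃ Z : Set β, (∀ x : α, ∃ z ∈ Z, A x z) ∧ c = #Z }

/-- The dual relation: `A^⊥ = (A₊, A₋, {(z,x) : ¬ A(x,z)})`. -/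
def dualRel {α β : Type u} (A : α → β → Prop) : β → α → Prop :=
  fun z x => ¬ A x z

/-- The relation part of the sequential composition `A;B`, with minus part
`α × (β → γ)` and plus part `β × δ`. -/
def seqComp {α β γ δ : Type u} (A : α → β → Prop) (B : γ → δ → Prop) :
    α × (β → γ) → β × δ → Prop :=
  fun p q => A p.1 q.1 ∧ B (p.2 q.1) q.2

section RelationNorm

variable {α β : Type u} (A : α → β → Prop)

lemma rnorm_le_mk {Z : Set β} (hZ : ∀ x : α, ∃ z ∈ Z, A x z) : rnorm A ≤ #Z :=
  csInf_le (OrderBot.bddBelow _) ⟨Z, hZ, rfl⟩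

lemma rnorm_eq_zero_of_isEmpty [IsEmpty α] : rnorm A = 0 :=
  le_zero_iff.mp <| (rnorm_le_mk A (Z := ∅) isEmptyElim).trans_eq (mk_eq_zero _)

lemma exists_cover_mk_eq_rnorm (hA : ∀ x : α, ∃ y : β, A x y) :
    ∃ Z : Set β, (∀ x : α, ∃ z ∈ Z, A x z) ∧ #Z = rnorm A := by
  obtain ⟨Z, hZ, hZA⟩ := csInf_mem (s := { c | ∃ Z : Set β, (∀ x : α, ∃ z ∈ Z, A x z) ∧ c = #Z })
    ⟨_, Set.univ, fun x => (hA x).imp fun y hy => ⟨trivial, hy⟩, rfl⟩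
  exact ⟨Z, hZ, hZA.symm⟩

end RelationNorm

lemma mk_mul_le_mk_of_le_mk_fiber {β δ : Type u} {S : Set (β × δ)} {U : Set β} {c : Cardinal.{u}}
    (h : ∀ u ∈ U, c ≤ #{w | (u, w) ∈ S}) : #U * c ≤ #S :=
  calc #U * c = sum fun _ : U => c := (sum_const' _ _).symm
    _ ≤ sum fun u : U => #{w | (u.1, w) ∈ S} := sum_le_sum _ _ fun u => h u u.2
    _ = #(Σ u : U, {w | (u.1, w) ∈ S}) := (mk_sigma _).symm
    _ ≤ #S := mk_le_of_injective (f := fun q => ⟨(q.1.1, q.2.1), q.2.2⟩) <| by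
        rintro ⟨⟨u, _⟩, ⟨w, _⟩⟩ ⟨⟨u', _⟩, ⟨w', _⟩⟩ h
        simp only [Subtype.mk.injEq, Prod.mk.injEq] at h
        obtain ⟨rfl, rfl⟩ := h
        rfl

section SeqComp

variable {α β γ δ : Type u} (A : α → β → Prop) (B : γ → δ → Prop)

lemma rnorm_seqComp_le (hA : ∀ x : α, ∃ y : β, A x y) (hB : ∀ x : γ, ∃ y : δ, B x y) :
    rnorm (seqComp A B) ≤ rnorm A * rnorm B := by
  obtain ⟨ZA, hZA, hZA_card⟩ := exists_cover_mk_eq_rnorm A hA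
  obtain ⟨ZB, hZB, hZB_card⟩ := exists_cover_mk_eq_rnorm B hB
  rw [← hZA_card, ← hZB_card, ← mk_setProd]
  refine rnorm_le_mk _ fun ⟨x, ρ⟩ => ?_
  obtain ⟨u, huZ, hxu⟩ := hZA x
  obtain ⟨w, hwZ, hw⟩ := hZB (ρ u)
  exact ⟨(u, w), ⟨huZ, hwZ⟩, hxu, hw⟩

lemma exists_full_fiber_of_forall_seq [Nonempty γ] {S : Set (β × δ)}
    (hS : ∀ (x : α) (ρ : β → γ), ∃ p ∈ S, A x p.1 ∧ B (ρ p.1) p.2) (x : α) :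
    ∃ u, (∀ c : γ, ∃ w, (u, w) ∈ S ∧ B c w) ∧ A x u := by
  by_contra! hx
  have hmiss : ∀ u, ∃ c : γ, A x u → ∀ w, (u, w) ∈ S → ¬ B c w := fun u => by
    by_cases hxu : A x u
    · have hnot_full : ¬ ∀ c : γ, ∃ w, (u, w) ∈ S ∧ B c w := fun hfull => hx u hfull hxu
      obtain ⟨c, hc⟩ := not_forall.mp hnot_full
      exact ⟨c, fun _ w hw hcw => hc ⟨w, hw, hcw⟩⟩
    · exact ⟨Classical.arbitrary γ, fun h => absurd h hxu⟩
  choose ρ hρ using hmiss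
  obtain ⟨⟨u, w⟩, hS_uw, hxu, hw⟩ := hS x ρ
  exact hρ u hxu w hS_uw hw

lemma rnorm_mul_rnorm_le_mk {S : Set (β × δ)}
    (hS : ∀ (x : α) (ρ : β → γ), ∃ p ∈ S, A x p.1 ∧ B (ρ p.1) p.2) :
    rnorm A * rnorm B ≤ #S := by
  cases isEmpty_or_nonempty γ
  · simp [rnorm_eq_zero_of_isEmpty B]
  set U : Set β := {u | ∀ c : γ, ∃ w, (u, w) ∈ S ∧ B c w}
  have hU : rnorm A ≤ #U := rnorm_le_mk A (exists_full_fiber_of_forall_seq A B hS)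
  have hfiber : ∀ u ∈ U, rnorm B ≤ #{w | (u, w) ∈ S} := fun u hu => rnorm_le_mk B hu
  exact (mul_le_mul_left hU _).trans (mk_mul_le_mk_of_le_mk_fiber hfiber)

lemma rnorm_seqComp (hA : ∀ x : α, ∃ y : β, A x y) (hB : ∀ x : γ, ∃ y : δ, B x y) :
    rnorm (seqComp A B) = rnorm A * rnorm B := by
  refine (rnorm_seqComp_le A B hA hB).antisymm ?_
  obtain ⟨S, hS, hS_card⟩ := exists_cover_mk_eq_rnorm (seqComp A B)
    fun ⟨x, ρ⟩ => (hA x).elim fun u hu => (hB (ρ u)).elim fun w hw => ⟨(u, w), hu, hw⟩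
  exact hS_card ▸ rnorm_mul_rnorm_le_mk A B fun x ρ => hS (x, ρ)

end SeqComp

theorem stmt16_general {α β γ δ : Type u} (A : α → β → Prop) (B : γ → δ → Prop)
    (hA₁ : ∀ x : α, ∃ y : β, A x y)
    (hB₁ : ∀ x : γ, ∃ y : δ, B x y) :
    rnorm (seqComp A B) = rnorm A * rnorm B ∧
    ∀ S : Set (β × δ),
      (∀ (x : α) (ρ : β → γ), ∃ p ∈ S, A x p.1 ∧ B (ρ p.1) p.2) →
      rnorm A * rnorm B ≤ #S :=
  ⟨rnorm_seqComp A B hA₁ hB₁, fun _ => rnorm_mul_rnorm_le_mk A B⟩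

/-- `‖A;B‖ = ‖A‖ · ‖B‖`; in particular, any `S ⊆ A₊ × B₊` witnessing the norm
condition for `A;B` has cardinality at least `‖A‖ · ‖B‖`. -/
theorem stmt16 {α β γ δ : Type u} (A : α → β → Prop) (B : γ → δ → Prop)
    (hA₁ : ∀ x : α, ∃ y : β, A x y) (hA₂ : ¬ ∃ y : β, ∀ x : α, A x y)
    (hB₁ : ∀ x : γ, ∃ y : δ, B x y) (hB₂ : ¬ ∃ y : δ, ∀ x : γ, B x y) :
    rnorm (seqComp A B) = rnorm A * rnorm B ∧
    ∀ S : Set (β × δ),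
      (∀ (x : α) (ρ : β → γ), ∃ p ∈ S, A x p.1 ∧ B (ρ p.1) p.2) →
      rnorm A * rnorm B ≤ #S :=
  stmt16_general A B hA₁ hB₁
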